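/- Let s ∈ S and let ξ be a filter in the inverse semigroup with zero S such that s⋆ * s * t ∈ ξ for all t ∈ ξ. Then λ_{s⋆}(λ_s(ξ)) = ξ. -/
import Mathlib


/-- An inverse semigroup with zero: every element `s` has a unique generalized
inverse `star s`, and `0` is absorbing. -/
class InverseSemigroupWithZero (S : Type*) extends Semigroup S, Zero S, Star S where
  zero_mul : ∀ s : S, 0 * s = 0
  mul_zero : ∀ s : S, s * 0 = 0
  mul_star_mul_self : ∀ s : S, s * star s * s = s
  star_mul_self_star : ∀ s : S, star s * s * star s = star s
  star_unique : ∀ s x : S, s * x * s = s → x * s * x = x → x = star s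

variable {S : Type*} [InverseSemigroupWithZero S]

/-- The natural partial order on an inverse semigroup: `s ≤ t` iff `t * s⋆ * s = s`. -/
def natLe (s t : S) : Prop := t * star s * s = s

/-- A filter in the inverse semigroup `S` (w.r.t. the natural partial order). -/
def IsFilterS (ξ : Set S) : Prop :=
  ξ.Nonempty ∧ (0 : S) ∉ ξ ∧
    (∀ x ∈ ξ, ∀ y : S, natLe x y → y ∈ ξ) ∧
    ∀ x ∈ ξ, ∀ y ∈ ξ, ∃ z ∈ ξ, natLe z x ∧ natLe z y

/-- An ultrafilter: a filter maximal under inclusion. -/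
def IsUltraS (ξ : Set S) : Prop :=
  IsFilterS ξ ∧ ∀ η : Set S, IsFilterS η → ξ ⊆ η → η = ξ

/-- The set `Ω` of all ultrafilters in `S`. -/
def OmegaAll (S : Type*) [InverseSemigroupWithZero S] : Set (Set S) := {ξ | IsUltraS ξ}

/-- `Ω_e`: the set of ultrafilters `ξ` with `eξ ⊆ ξ`. -/
def OmegaE (e : S) : Set (Set S) := {ξ | IsUltraS ξ ∧ ∀ t ∈ ξ, e * t ∈ ξ}

/-- The map `λₛ` on filters. -/
def lambdaMap (s : S) (ξ : Set S) : Set S := {u | ∃ t ∈ ξ, natLe (s * t) u}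

/-- `y` is dense in `x` (for idempotents `y ≤ x`): there is no nonzero idempotent
`z ≤ x` with `z * y = 0`. -/
def DenseIn (y x : S) : Prop :=
  ∀ z : S, IsIdempotentElem z → z * x = z → z * y = 0 → z = 0

/-- `s` essentially coincides with `t`. -/
def EssEq (s t : S) : Prop :=
  star s * s = star t * t ∧
    ∀ f : S, IsIdempotentElem f → f ≠ 0 → f * (star s * s) = f →
      ∃ e : S, IsIdempotentElem e ∧ e ≠ 0 ∧ e * f = e ∧ s * e = t * e

section Aux

open InverseSemigroupWithZero

private lemma isg_mss (a : S) : a * star a * a = a := mul_star_mul_self a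
private lemma isg_sms (a : S) : star a * a * star a = star a := star_mul_self_star a

private lemma isg_star_star (a : S) : star (star a) = a :=
  (star_unique (star a) a (isg_sms a) (isg_mss a)).symm

private lemma isg_idem_star_mul (a : S) : IsIdempotentElem (star a * a) := by
  show star a * a * (star a * a) = star a * a
  calc star a * a * (star a * a) = star a * (a * star a * a) := by
        simp only [mul_assoc]
    _ = star a * a := by rw [isg_mss]

private lemma isg_idem_mul_star (a : S) : IsIdempotentElem (a * star a) := by
  show a * star a * (a * star a) = a * star a
  calc a * star a * (a * star a) = a * star a * a * star a := by simp only [mul_assoc]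
    _ = a * star a := by rw [isg_mss]

private lemma isg_star_idem {e : S} (he : IsIdempotentElem e) : star e = e :=
  (star_unique e e (by rw [he, he]) (by rw [he, he])).symm

/-- Product of idempotents is idempotent. -/
private lemma isg_idem_mul {e f : S} (he : IsIdempotentElem e) (hf : IsIdempotentElem f) :
    IsIdempotentElem (e * f) := by
  set x := star (e * f) with hx
  have h1 : (e * f) * x * (e * f) = e * f := isg_mss _
  have h2 : x * (e * f) * x = x := isg_sms _
  have hy : f * x * e = x := by
    apply star_unique
    · calc (e * f) * (f * x * e) * (e * f)
          = e * (f * f) * x * (e * e) * f := by simp only [mul_assoc]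
        _ = e * f * x * (e * f) := by rw [hf, he]; simp only [mul_assoc]
        _ = e * f := h1
    · calc (f * x * e) * (e * f) * (f * x * e)
          = f * (x * ((e * e) * ((f * f) * (x * e)))) := by simp only [mul_assoc]
        _ = f * (x * (e * (f * (x * e)))) := by rw [he, hf]
        _ = f * (x * (e * f) * x) * e := by simp only [mul_assoc]
        _ = f * x * e := by rw [h2]
  have hxi : IsIdempotentElem x := by
    have hh : (f * x * e) * (f * x * e) = f * x * e := by
      calc (f * x * e) * (f * x * e) = f * (x * (e * f) * x) * e := by
            simp only [mul_assoc]
        _ = f * x * e := by rw [h2]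
    show x * x = x
    rw [← hy]; exact hh
  have h3 : e * f = x := by
    have hs := isg_star_idem hxi
    rw [hx] at hs ⊢
    rw [← hs, isg_star_star]
  rw [h3]; exact hxi

/-- Idempotents commute. -/
private lemma isg_idem_comm {e f : S} (he : IsIdempotentElem e) (hf : IsIdempotentElem f) :
    e * f = f * e := by
  have hef := isg_idem_mul he hf
  have hfe := isg_idem_mul hf he
  have : f * e = star (e * f) := by
    apply star_unique
    · calc (e * f) * (f * e) * (e * f) = e * (f * f) * (e * e) * f := by
            simp only [mul_assoc]
        _ = e * f * (e * f) := by rw [hf, he]; simp only [mul_assoc]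
        _ = e * f := hef
    · calc (f * e) * (e * f) * (f * e) = f * (e * e) * (f * f) * e := by
            simp only [mul_assoc]
        _ = f * e * (f * e) := by rw [he, hf]; simp only [mul_assoc]
        _ = f * e := hfe
  rw [this, isg_star_idem hef]

private lemma isg_star_mul (a b : S) : star (a * b) = star b * star a := by
  symm; apply star_unique
  · calc (a * b) * (star b * star a) * (a * b)
        = a * ((b * star b) * (star a * a)) * b := by simp only [mul_assoc]
      _ = a * ((star a * a) * (b * star b)) * b := by
          rw [isg_idem_comm (isg_idem_mul_star b) (isg_idem_star_mul a)]
      _ = (a * star a * a) * (b * star b * b) := by simp only [mul_assoc]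
      _ = a * b := by rw [isg_mss, isg_mss]
  · calc (star b * star a) * (a * b) * (star b * star a)
        = star b * ((star a * a) * (b * star b)) * star a := by simp only [mul_assoc]
      _ = star b * ((b * star b) * (star a * a)) * star a := by
          rw [isg_idem_comm (isg_idem_star_mul a) (isg_idem_mul_star b)]
      _ = (star b * b * star b) * (star a * a * star a) := by simp only [mul_assoc]
      _ = star b * star a := by rw [isg_sms, isg_sms]

/-- `x ≤ y` iff `x = y * e` for an idempotent `e`. -/
private lemma isg_natLe_of_idem_right {x y e : S} (he : IsIdempotentElem e)
    (hxy : x = y * e) : natLe x y := by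
  show y * star x * x = x
  rw [hxy, isg_star_mul, isg_star_idem he]
  calc y * (e * star y) * (y * e)
      = y * (e * (star y * y)) * e := by simp only [mul_assoc]
    _ = y * ((star y * y) * e) * e := by
        rw [isg_idem_comm he (isg_idem_star_mul y)]
    _ = (y * star y * y) * (e * e) := by simp only [mul_assoc]
    _ = y * e := by rw [isg_mss, he]

private lemma isg_eq_of_natLe {x y : S} (hxy : natLe x y) : x = y * (star x * x) := by
  rw [← mul_assoc, hxy]

private lemma isg_natLe_refl (x : S) : natLe x x := isg_mss x

private lemma isg_natLe_trans {x y z : S} (h1 : natLe x y) (h2 : natLe y z) : natLe x z := by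
  have hx := isg_eq_of_natLe h1
  have hy := isg_eq_of_natLe h2
  refine isg_natLe_of_idem_right
    (isg_idem_mul (isg_idem_star_mul y) (isg_idem_star_mul x)) ?_
  rw [← mul_assoc, ← hy, ← hx]

private lemma isg_natLe_mul_left {x y : S} (c : S) (h1 : natLe x y) : natLe (c * x) (c * y) := by
  refine isg_natLe_of_idem_right (isg_idem_star_mul x) ?_
  rw [mul_assoc, ← isg_eq_of_natLe h1]

private lemma isg_natLe_idem_mul {f : S} (hf : IsIdempotentElem f) (t : S) :
    natLe (f * t) t := by
  show t * star (f * t) * (f * t) = f * t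
  rw [isg_star_mul, isg_star_idem hf]
  calc t * (star t * f) * (f * t)
      = t * (star t * (f * (f * t))) := by simp only [mul_assoc]
    _ = t * (star t * (f * t)) := by rw [← mul_assoc f f t, hf]
    _ = t * star t * f * t := by simp only [mul_assoc]
    _ = f * (t * star t) * t := by rw [isg_idem_comm (isg_idem_mul_star t) hf]
    _ = f * t := by rw [mul_assoc, isg_mss]

end Aux


theorem lambdaMap_star_lambdaMap (s : S) (ξ : Set S) (hξ : IsFilterS ξ)
    (h : ∀ t ∈ ξ, star s * s * t ∈ ξ) :
    lambdaMap (star s) (lambdaMap s ξ) = ξ := by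
  obtain ⟨-, -, hup, -⟩ := hξ
  ext v
  constructor
  · rintro ⟨u, ⟨t, ht, hstu⟩, hsv⟩
    have h1 : natLe (star s * (s * t)) (star s * u) := isg_natLe_mul_left _ hstu
    have h2 : natLe (star s * s * t) v :=
      isg_natLe_trans (by rwa [mul_assoc]) hsv
    exact hup _ (h t ht) v h2
  · intro ht
    set t := v with htv
    refine ⟨s * (star s * s * t), ⟨star s * s * t, h t ht, isg_natLe_refl _⟩, ?_⟩
    have key : star s * (s * (star s * s * t)) = star s * s * t := by
      calc star s * (s * (star s * s * t)) = star s * s * (star s * s) * t := by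
            simp only [mul_assoc]
        _ = star s * s * t := by rw [isg_idem_star_mul s]
    rw [show natLe (star s * (s * (star s * s * t))) t ↔
        natLe (star s * s * t) t from by rw [key]]
    exact isg_natLe_idem_mul (isg_idem_star_mul s) t
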